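/- Let A¹_{nk} = [(k+1/3)2ⁿ, (k+2/3)2ⁿ] × [2ⁿ, 2^{n+1}] for n,k ∈ ℤ, and let I_{nk} = [k2ⁿ, (k+1)2ⁿ]. If f is supported on ⋃_{n,k} A¹_{nk} and f_{nk} = f·χ_{A¹_{nk}}, then: (a) with α = 2/3, Γ_α(x) ⊇ A¹_{nk} for all x ∈ I_{nk}, hence ‖f‖_{2/3} ≥ ∫_ℝ (∑_{n,k} χ_{I_{nk}}(x) ∫_{A¹_{nk}} |f_{nk}|² t^{-2} dy dt)^{1/2} dx; (b) with α = 1/6, Γ_α(x) ∩ A¹_{nk} = ∅ for all x ∉ I_{nk}, hence ‖f‖_{1/6} ≤ ∫_ℝ (∑_{n,k} χ_{I_{nk}}(x) ∫_{A¹_{nk}} |f_{nk}|² t^{-2} dy dt)^{1/2} dx. -/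

import Mathlib

open MeasureTheory
open scoped ENNReal Classical

/-- The cone `Γ_α(x) = {(y,t) ∈ ℝ × ℝ⁺ : |x − y| < αt}`. -/
def Gamma (α x : ℝ) : Set (ℝ × ℝ) := {p | 0 < p.2 ∧ |x - p.1| < α * p.2}

/-- The tent space norm `‖f‖_α = ∫_ℝ (∫_{Γ_α(x)} |f(y,t)|² t⁻² dy dt)^{1/2} dx`. -/
noncomputable def tentNorm (α : ℝ) (f : ℝ × ℝ → ℝ) : ENNReal :=
  ∫⁻ x : ℝ,
    (∫⁻ p in Gamma α x, ENNReal.ofReal ((f p) ^ 2 * (p.2 ^ 2)⁻¹)) ^ (1/2 : ℝ)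

/-- The dyadic interval `I_{nk} = [k2ⁿ, (k+1)2ⁿ]`. -/
def dyadicI (n k : ℤ) : Set ℝ := Set.Icc ((k : ℝ) * 2 ^ n) (((k : ℝ) + 1) * 2 ^ n)

/-- The middle-third rectangle `A¹_{nk} = [(k+1/3)2ⁿ, (k+2/3)2ⁿ] × [2ⁿ, 2^{n+1}]`. -/
def Aone (n k : ℤ) : Set (ℝ × ℝ) :=
  Set.Icc (((k : ℝ) + 1/3) * 2 ^ n) (((k : ℝ) + 2/3) * 2 ^ n) ×ˢ
    Set.Icc ((2 : ℝ) ^ n) ((2 : ℝ) ^ (n + 1))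

/-- The open version of `Aone`. -/
def AoneInt (n k : ℤ) : Set (ℝ × ℝ) :=
  Set.Ioo (((k : ℝ) + 1/3) * 2 ^ n) (((k : ℝ) + 2/3) * 2 ^ n) ×ˢ
    Set.Ioo ((2 : ℝ) ^ n) ((2 : ℝ) ^ (n + 1))

lemma rect_ae (a b c d : ℝ) :
    (Set.Ioo a b ×ˢ Set.Ioo c d : Set (ℝ × ℝ)) =ᵐ[volume] Set.Icc a b ×ˢ Set.Icc c d := by
  rw [MeasureTheory.ae_eq_set]
  have hsub : (Set.Ioo a b ×ˢ Set.Ioo c d : Set (ℝ × ℝ)) ⊆ Set.Icc a b ×ˢ Set.Icc c d :=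
    Set.prod_mono Set.Ioo_subset_Icc_self Set.Ioo_subset_Icc_self
  constructor
  · rw [Set.diff_eq_empty.2 hsub]; exact measure_empty
  · refine measure_mono_null (t := ({a, b} ×ˢ Set.univ) ∪ (Set.univ ×ˢ ({c, d} : Set ℝ)))
      (fun p hp => ?_) ?_
    · obtain ⟨⟨h1, h2⟩, h3⟩ := hp
      rw [Set.mem_prod] at h3
      push_neg at h3
      by_cases h4 : p.1 ∈ Set.Ioo a b
      · right
        have := h3 h4
        rcases h1 with ⟨ha, hb⟩; rcases h2 with ⟨hc, hd⟩
        simp only [Set.mem_prod, Set.mem_univ, true_and, Set.mem_insert_iff,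
          Set.mem_singleton_iff]
        rcases lt_or_eq_of_le hc with h | h
        · right; by_contra h'; exact this ⟨h, lt_of_le_of_ne hd h'⟩
        · left; exact h.symm
      · left
        rcases h1 with ⟨ha, hb⟩
        simp only [Set.mem_prod, Set.mem_univ, and_true, Set.mem_insert_iff,
          Set.mem_singleton_iff]
        rcases lt_or_eq_of_le ha with h | h
        · right; by_contra h'
          exact h4 ⟨h, lt_of_le_of_ne hb (by exact fun e => h' e)⟩
        · left; exact h.symm
    · refine measure_union_null ?_ ?_ <;>
      · rw [MeasureTheory.Measure.volume_eq_prod, MeasureTheory.Measure.prod_prod]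
        first
        | rw [Set.Finite.measure_zero (Set.toFinite ({a,b} : Set ℝ)) volume, zero_mul]
        | rw [Set.Finite.measure_zero (Set.toFinite ({c,d} : Set ℝ)) volume, mul_zero]

lemma AoneInt_ae (n k : ℤ) : AoneInt n k =ᵐ[volume] Aone n k := rect_ae _ _ _ _

lemma AoneInt_meas (n k : ℤ) : MeasurableSet (AoneInt n k) :=
  measurableSet_Ioo.prod measurableSet_Ioo

lemma Aone_meas (n k : ℤ) : MeasurableSet (Aone n k) :=
  measurableSet_Icc.prod measurableSet_Icc

lemma two_zpow_pos (n : ℤ) : (0 : ℝ) < 2 ^ n := zpow_pos (by norm_num) n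

lemma AoneInt_disj : Pairwise (Function.onFun Disjoint fun nk : ℤ × ℤ => AoneInt nk.1 nk.2) := by
  rintro ⟨n, k⟩ ⟨n', k'⟩ hne
  rw [Function.onFun, Set.disjoint_left]
  rintro ⟨y, t⟩ ⟨⟨hy1, hy2⟩, ⟨ht1, ht2⟩⟩ ⟨⟨hy1', hy2'⟩, ⟨ht1', ht2'⟩⟩
  simp only at *
  rcases eq_or_ne n n' with rfl | hnn
  · -- same n, different k
    have hkk : k ≠ k' := by simpa [Prod.ext_iff] using hne
    have h2n := two_zpow_pos n
    rcases lt_or_gt_of_ne hkk with h | h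
    · have hk1 : (k : ℝ) + 1 ≤ k' := by exact_mod_cast Int.add_one_le_iff.2 h
      nlinarith
    · have hk1 : (k' : ℝ) + 1 ≤ k := by exact_mod_cast Int.add_one_le_iff.2 h
      nlinarith
  · rcases lt_or_gt_of_ne hnn with h | h
    · have : (2 : ℝ) ^ (n + 1) ≤ 2 ^ n' :=
        zpow_le_zpow_right₀ (by norm_num) (by omega)
      linarith
    · have : (2 : ℝ) ^ (n' + 1) ≤ 2 ^ n :=
        zpow_le_zpow_right₀ (by norm_num) (by omega)
      linarith

lemma AoneInt_subset_Gamma {n k : ℤ} {x : ℝ} (hx : x ∈ dyadicI n k) :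
    AoneInt n k ⊆ Gamma (2/3) x := by
  rintro ⟨y, t⟩ ⟨⟨hy1, hy2⟩, ⟨ht1, ht2⟩⟩
  obtain ⟨hx1, hx2⟩ := hx
  have h2n := two_zpow_pos n
  refine ⟨lt_trans h2n ht1, abs_lt.2 ⟨?_, ?_⟩⟩ <;> simp only at * <;> nlinarith

lemma Gamma_inter_Aone_empty {n k : ℤ} {x : ℝ} (hx : x ∉ dyadicI n k) :
    Gamma (1/6) x ∩ Aone n k = ∅ := by
  rw [Set.eq_empty_iff_forall_notMem]
  rintro ⟨y, t⟩ ⟨⟨hpt, habs⟩, ⟨⟨hy1, hy2⟩, ⟨ht1, ht2⟩⟩⟩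
  rw [dyadicI, Set.mem_Icc, not_and_or, not_le, not_le] at hx
  have h2n := two_zpow_pos n
  have h2n1 : (2 : ℝ) ^ (n + 1) = 2 ^ n * 2 := zpow_add_one₀ (by norm_num) n
  rw [abs_lt] at habs
  simp only at *
  rcases hx with h | h
  · nlinarith
  · nlinarith

section Pointwise

variable (g : ℝ × ℝ → ℝ≥0∞)

lemma pt_a (x : ℝ) :
    (∑' nk : ℤ × ℤ,
      Set.indicator (dyadicI nk.1 nk.2) (fun _ => (1 : ENNReal)) x *
        ∫⁻ p in Aone nk.1 nk.2, g p) ≤ ∫⁻ p in Gamma (2/3) x, g p := by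
  set B : ℤ × ℤ → Set (ℝ × ℝ) := fun nk =>
    if x ∈ dyadicI nk.1 nk.2 then AoneInt nk.1 nk.2 else ∅ with hB
  have hterm : ∀ nk : ℤ × ℤ,
      Set.indicator (dyadicI nk.1 nk.2) (fun _ => (1 : ENNReal)) x *
        (∫⁻ p in Aone nk.1 nk.2, g p) = ∫⁻ p in B nk, g p := by
    intro nk
    by_cases h : x ∈ dyadicI nk.1 nk.2
    · rw [Set.indicator_of_mem h, one_mul, hB]
      simp only [if_pos h]
      exact (setLIntegral_congr (AoneInt_ae nk.1 nk.2)).symm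
    · rw [Set.indicator_of_notMem h, zero_mul, hB]
      simp [if_neg h]
  rw [tsum_congr hterm,
    ← lintegral_iUnion (fun nk => by
        by_cases h : x ∈ dyadicI nk.1 nk.2 <;>
          simp [hB, h, AoneInt_meas, MeasurableSet.empty])
      (fun i j hij => by
        by_cases hi : x ∈ dyadicI i.1 i.2 <;> by_cases hj : x ∈ dyadicI j.1 j.2 <;>
          simp only [Function.onFun, hB, if_pos, if_neg, hi, hj] <;>
          simp [AoneInt_disj hij, Function.onFun] ) g]
  refine lintegral_mono_set (Set.iUnion_subset fun nk => ?_)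
  by_cases h : x ∈ dyadicI nk.1 nk.2
  · simp only [hB, if_pos h]
    exact AoneInt_subset_Gamma h
  · simp [hB, if_neg h]

lemma pt_b (x : ℝ) (hg0 : ∀ p, p ∉ ⋃ nk : ℤ × ℤ, Aone nk.1 nk.2 → g p = 0) :
    (∫⁻ p in Gamma (1/6) x, g p) ≤
      ∑' nk : ℤ × ℤ,
        Set.indicator (dyadicI nk.1 nk.2) (fun _ => (1 : ENNReal)) x *
          ∫⁻ p in Aone nk.1 nk.2, g p := by
  set U : Set (ℝ × ℝ) := ⋃ nk : ℤ × ℤ, Aone nk.1 nk.2 with hU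
  have hUm : MeasurableSet U := MeasurableSet.iUnion fun nk => Aone_meas _ _
  have hgU : g = U.indicator g := by
    funext p
    by_cases h : p ∈ U
    · rw [Set.indicator_of_mem h]
    · rw [Set.indicator_of_notMem h, hg0 p h]
  have h1 : (∫⁻ p in Gamma (1/6) x, g p) = ∫⁻ p in U ∩ Gamma (1/6) x, g p := by
    conv_lhs => rw [hgU]
    rw [lintegral_indicator hUm, Measure.restrict_restrict hUm]
  rw [h1]
  have h2 : U ∩ Gamma (1/6) x = ⋃ nk : ℤ × ℤ, (Aone nk.1 nk.2 ∩ Gamma (1/6) x) := by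
    rw [hU, Set.iUnion_inter]
  rw [h2]
  refine le_trans (lintegral_iUnion_le _ _) (ENNReal.tsum_le_tsum fun nk => ?_)
  by_cases h : x ∈ dyadicI nk.1 nk.2
  · rw [Set.indicator_of_mem h, one_mul]
    exact lintegral_mono_set Set.inter_subset_left
  · have : Aone nk.1 nk.2 ∩ Gamma (1/6) x = ∅ := by
      rw [Set.inter_comm]; exact Gamma_inter_Aone_empty h
    rw [this, Measure.restrict_empty, lintegral_zero_measure]
    exact zero_le

end Pointwise

/-- If `f` is supported on `⋃_{n,k} A¹_{nk}` (with `f_{nk} = f·χ_{A¹_{nk}}`),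
then, writing `R f` for the dyadic square expression
`∫_ℝ (∑_{n,k} χ_{I_{nk}}(x) ∫_{A¹_{nk}} |f_{nk}|² t⁻² dy dt)^{1/2} dx`:
(a) `‖f‖_{2/3} ≥ R f` (as `Γ_{2/3}(x) ⊇ A¹_{nk}` for `x ∈ I_{nk}`), and
(b) `‖f‖_{1/6} ≤ R f` (as `Γ_{1/6}(x) ∩ A¹_{nk} = ∅` for `x ∉ I_{nk}`). -/
theorem stmt10
    (f : ℝ × ℝ → ℝ) (hf : Measurable f)
    (hsupp : ∀ p, p ∉ ⋃ nk : ℤ × ℤ, Aone nk.1 nk.2 → f p = 0) :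
    (∫⁻ x : ℝ,
        (∑' nk : ℤ × ℤ,
          Set.indicator (dyadicI nk.1 nk.2) (fun _ => (1 : ENNReal)) x *
            ∫⁻ p in Aone nk.1 nk.2,
              ENNReal.ofReal ((f p) ^ 2 * (p.2 ^ 2)⁻¹)) ^ (1/2 : ℝ)) ≤
      tentNorm (2/3) f ∧
    tentNorm (1/6) f ≤
      ∫⁻ x : ℝ,
        (∑' nk : ℤ × ℤ,
          Set.indicator (dyadicI nk.1 nk.2) (fun _ => (1 : ENNReal)) x *
            ∫⁻ p in Aone nk.1 nk.2,
              ENNReal.ofReal ((f p) ^ 2 * (p.2 ^ 2)⁻¹)) ^ (1/2 : ℝ) := by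
  set g : ℝ × ℝ → ℝ≥0∞ := fun p => ENNReal.ofReal ((f p) ^ 2 * (p.2 ^ 2)⁻¹) with hg
  have hg0 : ∀ p, p ∉ ⋃ nk : ℤ × ℤ, Aone nk.1 nk.2 → g p = 0 := by
    intro p hp
    simp [hg, hsupp p hp]
  constructor
  · exact lintegral_mono fun x =>
      ENNReal.rpow_le_rpow (pt_a g x) (by norm_num)
  · exact lintegral_mono fun x =>
      ENNReal.rpow_le_rpow (pt_b g x hg0) (by norm_num)
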